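/- arXiv:2206.08183 — 2 statements merged into one kernel-verified Lean document; each statement's English description precedes it below -/
import Mathlib

section
/- Let ρ₁,…,ρₙ be density matrices on ℂ^d that pairwise commute, and let p be a probability vector. Then for any density matrix σ commuting with all ρᵢ, the average fidelity satisfies Σᵢ pᵢ F(ρᵢ, σ) ≤ √(Σ_{i,j} pᵢ pⱼ F(ρᵢ, ρⱼ)), with equality when σ is proportional to (Σᵢ pᵢ ρᵢ^{1/2})². -/
open Matrix BigOperators Finset ComplexOrder

variable {d n : ℕ}

open Classical in
/-- The positive semidefinite square root (zero if not PSD). -/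
noncomputable def psqrt (A : Matrix (Fin d) (Fin d) ℂ) : Matrix (Fin d) (Fin d) ℂ :=
  if h : A.PosSemidef then (h.1.eigenvectorUnitary : Matrix (Fin d) (Fin d) ℂ) *
    diagonal ((↑) ∘ Real.sqrt ∘ h.1.eigenvalues) *
    (star h.1.eigenvectorUnitary : Matrix (Fin d) (Fin d) ℂ) else 0

/-- Trace norm ‖A‖₁ = Tr √(A*A). -/
noncomputable def traceNorm (A : Matrix (Fin d) (Fin d) ℂ) : ℝ :=
  ((psqrt (Aᴴ * A)).trace).re

/-- Fidelity F(ρ,σ) = Tr √(σ^{1/2} ρ σ^{1/2}). -/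
noncomputable def fid (ρ σ : Matrix (Fin d) (Fin d) ℂ) : ℝ :=
  ((psqrt (psqrt σ * ρ * psqrt σ)).trace).re

/-- Density matrix: positive semidefinite with unit trace. -/
def IsDensity (ρ : Matrix (Fin d) (Fin d) ℂ) : Prop := ρ.PosSemidef ∧ ρ.trace = 1

/-- Contraction: spectral norm at most one, i.e. 1 - UᴴU ⪰ 0. -/
def IsContraction (U : Matrix (Fin d) (Fin d) ℂ) : Prop := (1 - Uᴴ * U).PosSemidef

/-- Probability vector. -/
def IsProbVec (p : Fin n → ℝ) : Prop := (∀ i, 0 ≤ p i) ∧ ∑ i, p i = 1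


/-!
For commuting states `F(ρ, σ) = Tr(√ρ √σ)`, so with `W = ∑ᵢ pᵢ √ρᵢ` the average fidelity is
`Re Tr(W √σ)` and `Tr(W²) = ∑ᵢⱼ pᵢ pⱼ F(ρᵢ, ρⱼ)`. Cauchy–Schwarz for the Hilbert–Schmidt inner
product bounds `Re Tr(W √σ)` by `√Tr(W²) · √Tr σ = √Tr(W²)`, with equality when `√σ` is a
multiple of `W`.
-/

open scoped MatrixOrder

section CFC

variable {A : Type*} [Ring A] [StarRing A] [Algebra ℝ A] [TopologicalSpace A]
  [ContinuousFunctionalCalculus ℝ A IsSelfAdjoint] [IsTopologicalRing A] [T2Space A]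
  [PartialOrder A] [NonnegSpectrumClass ℝ A] [StarOrderedRing A] {a b : A}

theorem Commute.cfcSqrt_left (h : Commute a b) : Commute (CFC.sqrt a) b := by
  rw [CFC.sqrt_eq_cfc]
  exact h.cfc_nnreal _

theorem Commute.mul_nonneg_of_cfc (ha : 0 ≤ a) (hb : 0 ≤ b) (h : Commute a b) :
    0 ≤ a * b := by
  have : a * b = CFC.sqrt a * b * CFC.sqrt a := by
    rw [mul_assoc, ← h.cfcSqrt_left.eq, ← mul_assoc, CFC.sqrt_mul_sqrt_self a ha]
  rw [this]
  exact conjugate_nonneg_of_nonneg hb (CFC.sqrt_nonneg a)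

theorem CFC.sqrt_sqrt_mul_mul_sqrt_of_commute (ha : 0 ≤ a) (h : Commute a b) :
    CFC.sqrt (CFC.sqrt b * a * CFC.sqrt b) = CFC.sqrt a * CFC.sqrt b := by
  have hab : Commute (CFC.sqrt a) (CFC.sqrt b) := h.symm.cfcSqrt_left.symm.cfcSqrt_left
  refine CFC.sqrt_unique ?_ (hab.mul_nonneg_of_cfc (CFC.sqrt_nonneg a) (CFC.sqrt_nonneg b))
  calc CFC.sqrt a * CFC.sqrt b * (CFC.sqrt a * CFC.sqrt b)
      = CFC.sqrt b * (CFC.sqrt a * CFC.sqrt a) * CFC.sqrt b := by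
        nth_rewrite 1 [hab.eq]
        simp only [mul_assoc]
    _ = CFC.sqrt b * a * CFC.sqrt b := by rw [CFC.sqrt_mul_sqrt_self a ha]

end CFC

namespace Matrix

variable {m 𝕜 : Type*} [Fintype m] [RCLike 𝕜]

theorem re_trace_mul_le_sqrt_mul_sqrt {X Y : Matrix m m 𝕜} (hX : X.IsHermitian)
    (hY : Y.IsHermitian) :
    RCLike.re (X * Y).trace ≤ √(RCLike.re (X * X).trace) * √(RCLike.re (Y * Y).trace) := by
  classical
  -- the Hilbert–Schmidt inner product `⟪X, Y⟫ = Tr(Y Xᴴ)`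
  let := toMatrixSeminormedAddCommGroup (1 : Matrix m m 𝕜) PosSemidef.one
  let := toMatrixInnerProductSpace (1 : Matrix m m 𝕜) PosSemidef.one
  have h := re_inner_le_norm (𝕜 := 𝕜) X Y
  simp only [norm_eq_sqrt_re_inner (𝕜 := 𝕜)] at h
  change RCLike.re (Y * 1 * Xᴴ).trace ≤
    √(RCLike.re (X * 1 * Xᴴ).trace) * √(RCLike.re (Y * 1 * Yᴴ).trace) at h
  simp only [hX.eq, hY.eq, mul_one] at h
  rwa [trace_mul_comm Y] at h

end Matrix

-- Off the PSD cone both sides are `0`.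
theorem psqrt_eq_sqrt (A : Matrix (Fin d) (Fin d) ℂ) : psqrt A = CFC.sqrt A := by
  by_cases hA : A.PosSemidef
  · rw [psqrt, dif_pos hA, CFC.sqrt_eq_cfc, cfc_nnreal_eq_real _ A, hA.1.cfc_eq, IsHermitian.cfc,
      Unitary.conjStarAlgAut_apply]
    congr 3
    funext i
    simp [max_eq_left (hA.eigenvalues_nonneg i)]
  · rw [psqrt, dif_neg hA, CFC.sqrt_eq_cfc, cfc_apply_of_not_predicate A]
    rwa [← Matrix.nonneg_iff_posSemidef] at hA

theorem posSemidef_psqrt (A : Matrix (Fin d) (Fin d) ℂ) : (psqrt A).PosSemidef := by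
  rw [psqrt_eq_sqrt]
  exact (CFC.sqrt_nonneg A).posSemidef

theorem fid_eq_re_trace_psqrt_mul_psqrt {ρ σ : Matrix (Fin d) (Fin d) ℂ} (hρ : ρ.PosSemidef)
    (h : Commute ρ σ) : fid ρ σ = (psqrt ρ * psqrt σ).trace.re := by
  simp only [fid, psqrt_eq_sqrt, CFC.sqrt_sqrt_mul_mul_sqrt_of_commute hρ.nonneg h]

noncomputable def weightedSqrtSum (ρ : Fin n → Matrix (Fin d) (Fin d) ℂ) (p : Fin n → ℝ) :
    Matrix (Fin d) (Fin d) ℂ :=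
  ∑ i, (p i : ℂ) • psqrt (ρ i)

section weightedSqrtSum

variable {ρ : Fin n → Matrix (Fin d) (Fin d) ℂ} {p : Fin n → ℝ}

theorem isHermitian_weightedSqrtSum : (weightedSqrtSum ρ p).IsHermitian :=
  isSelfAdjoint_sum _ fun i _ ↦
    IsSelfAdjoint.smul (Complex.conj_ofReal (p i)) (posSemidef_psqrt (ρ i)).1

theorem posSemidef_weightedSqrtSum (hp : ∀ i, 0 ≤ p i) : (weightedSqrtSum ρ p).PosSemidef :=
  Matrix.posSemidef_sum _ fun i _ ↦
    (posSemidef_psqrt (ρ i)).smul (Complex.zero_le_real.mpr (hp i))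

theorem commute_weightedSqrtSum (hcomm : ∀ i j, Commute (ρ i) (ρ j)) (i : Fin n) :
    Commute (ρ i) (weightedSqrtSum ρ p) :=
  Commute.sum_right _ _ _ fun j _ ↦ by
    rw [psqrt_eq_sqrt]
    exact (hcomm j i).cfcSqrt_left.symm.smul_right _

theorem re_trace_weightedSqrtSum_mul (B : Matrix (Fin d) (Fin d) ℂ) :
    (weightedSqrtSum ρ p * B).trace.re = ∑ i, p i * (psqrt (ρ i) * B).trace.re := by
  simp [weightedSqrtSum, Finset.sum_mul, Matrix.trace_sum, Complex.re_sum]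

theorem re_trace_weightedSqrtSum_mul_self (hρ : ∀ i, (ρ i).PosSemidef)
    (hcomm : ∀ i j, Commute (ρ i) (ρ j)) :
    (weightedSqrtSum ρ p * weightedSqrtSum ρ p).trace.re =
      ∑ i, ∑ j, p i * p j * fid (ρ i) (ρ j) := by
  rw [re_trace_weightedSqrtSum_mul]
  refine Finset.sum_congr rfl fun i _ ↦ ?_
  simp [weightedSqrtSum, Finset.mul_sum, Matrix.trace_sum, Complex.re_sum,
    fid_eq_re_trace_psqrt_mul_psqrt (hρ _) (hcomm _ _), mul_assoc]

theorem sum_mul_fid_eq_re_trace (hρ : ∀ i, (ρ i).PosSemidef) {σ : Matrix (Fin d) (Fin d) ℂ}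
    (hσ : ∀ i, Commute (ρ i) σ) :
    ∑ i, p i * fid (ρ i) σ = (weightedSqrtSum ρ p * psqrt σ).trace.re := by
  simp [re_trace_weightedSqrtSum_mul, fid_eq_re_trace_psqrt_mul_psqrt (hρ _) (hσ _)]

theorem sum_mul_fid_le (hρ : ∀ i, (ρ i).PosSemidef) (hcomm : ∀ i j, Commute (ρ i) (ρ j))
    {σ : Matrix (Fin d) (Fin d) ℂ} (hσ : IsDensity σ) (hσρ : ∀ i, Commute (ρ i) σ) :
    ∑ i, p i * fid (ρ i) σ ≤ √(∑ i, ∑ j, p i * p j * fid (ρ i) (ρ j)) :=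
  calc ∑ i, p i * fid (ρ i) σ = (weightedSqrtSum ρ p * psqrt σ).trace.re :=
        sum_mul_fid_eq_re_trace hρ hσρ
    _ ≤ √(weightedSqrtSum ρ p * weightedSqrtSum ρ p).trace.re * √(psqrt σ * psqrt σ).trace.re :=
        Matrix.re_trace_mul_le_sqrt_mul_sqrt isHermitian_weightedSqrtSum (posSemidef_psqrt σ).1
    _ = √(∑ i, ∑ j, p i * p j * fid (ρ i) (ρ j)) := by
        rw [re_trace_weightedSqrtSum_mul_self hρ hcomm, psqrt_eq_sqrt,
          CFC.sqrt_mul_sqrt_self σ hσ.1.nonneg, hσ.2]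
        simp

theorem sum_mul_fid_eq_of_eq_smul (hρ : ∀ i, (ρ i).PosSemidef)
    (hcomm : ∀ i j, Commute (ρ i) (ρ j)) (hp : ∀ i, 0 ≤ p i) {σ : Matrix (Fin d) (Fin d) ℂ}
    (hσ : σ.trace = 1) {c : ℝ} (hc : 0 < c)
    (hσW : σ = (c : ℂ) • (weightedSqrtSum ρ p * weightedSqrtSum ρ p)) :
    ∑ i, p i * fid (ρ i) σ = √(∑ i, ∑ j, p i * p j * fid (ρ i) (ρ j)) := by
  set W := weightedSqrtSum ρ p
  have hsqrtσ : psqrt σ = (√c : ℂ) • W := by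
    rw [psqrt_eq_sqrt]
    refine CFC.sqrt_unique ?_ ?_
    · rw [smul_mul_smul_comm, ← Complex.ofReal_mul, Real.mul_self_sqrt hc.le, hσW]
    · exact smul_nonneg (Complex.zero_le_real.mpr (Real.sqrt_nonneg c))
        (posSemidef_weightedSqrtSum hp).nonneg
  have hσρ (i : Fin n) : Commute (ρ i) σ := by
    rw [hσW]
    exact ((commute_weightedSqrtSum hcomm i).mul_right
      (commute_weightedSqrtSum hcomm i)).smul_right _
  have htrace : (W * W).trace.re = c⁻¹ := by
    rw [hσW, trace_smul, smul_eq_mul] at hσ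
    have h := congrArg Complex.re hσ
    rw [Complex.re_ofReal_mul, Complex.one_re] at h
    exact eq_inv_of_mul_eq_one_right h
  rw [sum_mul_fid_eq_re_trace hρ hσρ, ← re_trace_weightedSqrtSum_mul_self hρ hcomm, hsqrtσ,
    mul_smul_comm, trace_smul, smul_eq_mul, Complex.re_ofReal_mul]
  change √c * (W * W).trace.re = √(W * W).trace.re
  rw [htrace, Real.sqrt_inv]
  field_simp
  exact Real.sq_sqrt hc.le

end weightedSqrtSum

/-- Product bound for pairwise commuting ensembles, with equality for states proportional
to (Σᵢ pᵢ ρᵢ^{1/2})². -/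
theorem commuting_product_bound (ρ : Fin n → Matrix (Fin d) (Fin d) ℂ) (p : Fin n → ℝ)
    (hρ : ∀ i, IsDensity (ρ i)) (hp : IsProbVec p)
    (hcomm : ∀ i j, Commute (ρ i) (ρ j)) :
    (∀ σ : Matrix (Fin d) (Fin d) ℂ, IsDensity σ → (∀ i, Commute (ρ i) σ) →
        ∑ i, p i * fid (ρ i) σ ≤ Real.sqrt (∑ i, ∑ j, p i * p j * fid (ρ i) (ρ j))) ∧
    (∀ σ : Matrix (Fin d) (Fin d) ℂ, IsDensity σ →
        (∃ c : ℝ, 0 < c ∧ σ = (c : ℂ) •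
          ((∑ i, (p i : ℂ) • psqrt (ρ i)) * (∑ i, (p i : ℂ) • psqrt (ρ i)))) →
        ∑ i, p i * fid (ρ i) σ = Real.sqrt (∑ i, ∑ j, p i * p j * fid (ρ i) (ρ j))) := by
  have hρ_psd (i : Fin n) : (ρ i).PosSemidef := (hρ i).1
  refine ⟨fun σ hσ hσρ ↦ sum_mul_fid_le hρ_psd hcomm hσ hσρ, ?_⟩
  rintro σ hσ ⟨c, hc, hσW⟩
  exact sum_mul_fid_eq_of_eq_smul hρ_psd hcomm hp.1 hσ.2 hc hσW
end

section
/- Let ρ₁,…,ρₙ be positive definite density matrices, p a probability vector with all pᵢ > 0, and suppose a positive definite density matrix σ satisfies σ = (1/f(σ)) Σᵢ pᵢ √(σ^{1/2} ρᵢ σ^{1/2}) where f(σ) = Σᵢ pᵢ F(ρᵢ,σ). If additionally every ρᵢ commutes with σ, then σ = C²/Tr(C²) with C = Σᵢ pᵢ ρᵢ^{1/2}. -/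
open Matrix BigOperators Finset ComplexOrder

variable {d n : ℕ}

/-
When `σ` commutes with every `ρᵢ`, the square roots `σ^{1/2}` and `ρᵢ^{1/2}` commute as well, so
`√(σ^{1/2} ρᵢ σ^{1/2}) = ρᵢ^{1/2} σ^{1/2}` and the fixed-point equation collapses to
`σ = f⁻¹ • C σ^{1/2}`. Cancelling the invertible `σ^{1/2}` gives `C = f • σ^{1/2}`, hence
`C² = f² σ`, and normalizing by the trace removes the scalar `f²`.
-/

open scoped MatrixOrder

namespace CFC

variable {A : Type*} [Ring A] [PartialOrder A] [StarRing A] [StarOrderedRing A]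
  [TopologicalSpace A] [IsTopologicalRing A] [T2Space A] [Algebra ℝ A]
  [ContinuousFunctionalCalculus ℝ A IsSelfAdjoint] [NonnegSpectrumClass ℝ A]

lemma _root_.Commute.sqrt_left {a b : A} (h : Commute a b) : Commute (sqrt a) b := by
  rw [sqrt_eq_cfc]
  exact h.cfc_nnreal _

lemma sqrt_sqrt_mul_mul_sqrt_of_commute_s18 {a b : A} (ha : 0 ≤ a) (hb : 0 ≤ b)
    (h : Commute a b) : sqrt (sqrt b * a * sqrt b) = sqrt a * sqrt b := by
  have hab : Commute (sqrt a) (sqrt b) := h.sqrt_left.symm.sqrt_left.symm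
  refine sqrt_unique ?_ (hab.mul_nonneg (sqrt_nonneg a) (sqrt_nonneg b))
  calc sqrt a * sqrt b * (sqrt a * sqrt b) = sqrt a * sqrt a * (sqrt b * sqrt b) := by
        rw [hab.mul_mul_mul_comm]
    _ = a * b := by rw [sqrt_mul_sqrt_self a, sqrt_mul_sqrt_self b]
    _ = sqrt b * a * sqrt b := by rw [h.symm.sqrt_left.eq, mul_assoc, sqrt_mul_sqrt_self b]

end CFC

lemma psqrt_eq_cfcSqrt (M : Matrix (Fin d) (Fin d) ℂ) : psqrt M = CFC.sqrt M := by
  by_cases hM : M.PosSemidef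
  · rw [psqrt, dif_pos hM, CFC.sqrt_eq_cfc, cfc_nnreal_eq_real _ M hM.nonneg, hM.1.cfc_eq]
    simp only [IsHermitian.cfc, Unitary.conjStarAlgAut_apply]
    congr 3
    funext i
    simp [hM.eigenvalues_nonneg i]
  · rw [psqrt, dif_neg hM, CFC.sqrt_of_not_nonneg (by rwa [nonneg_iff_posSemidef])]

lemma eq_smul_of_mul_self_eq_smul_mul {K A : Type*} [Field K] [Ring A] [Algebra K A]
    {s x : A} {c : K} (hs : IsUnit s) (hc : c ≠ 0) (h : s * s = c⁻¹ • (x * s)) :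
    x = c • s := by
  have hsx : s = c⁻¹ • x := hs.mul_left_injective <| by
    simpa only [smul_mul_assoc] using h
  rw [hsx, smul_smul, mul_inv_cancel₀ hc, one_smul]

theorem fixed_point_commuting_is_commuting_estimator_general
    (ρ : Fin n → Matrix (Fin d) (Fin d) ℂ) (p : Fin n → ℝ)
    (σ : Matrix (Fin d) (Fin d) ℂ)
    (hρ : ∀ i, (ρ i).PosDef ∧ (ρ i).trace = 1)
    (hσ : σ.PosDef) (hσ1 : σ.trace = 1)
    (hfix : σ = ((∑ i, p i * fid (ρ i) σ : ℝ) : ℂ)⁻¹ •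
      ∑ i, (p i : ℂ) • psqrt (psqrt σ * ρ i * psqrt σ))
    (hcomm : ∀ i, Commute (ρ i) σ) :
    let C : Matrix (Fin d) (Fin d) ℂ := ∑ i, (p i : ℂ) • psqrt (ρ i)
    σ = ((C * C).trace)⁻¹ • (C * C) := by
  intro C
  set f : ℂ := ((∑ i, p i * fid (ρ i) σ : ℝ) : ℂ)
  set S := CFC.sqrt σ
  have hS : S * S = σ := CFC.sqrt_mul_sqrt_self σ hσ.posSemidef.nonneg
  have hsum : ∑ i, (p i : ℂ) • psqrt (psqrt σ * ρ i * psqrt σ) = C * S := by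
    simp only [C, S, psqrt_eq_cfcSqrt, Finset.sum_mul, smul_mul_assoc,
      CFC.sqrt_sqrt_mul_mul_sqrt_of_commute_s18 (hρ _).1.posSemidef.nonneg hσ.posSemidef.nonneg
        (hcomm _)]
  rw [hsum] at hfix
  have hf : f ≠ 0 := by
    rintro hf
    rw [hf, _root_.inv_zero, zero_smul] at hfix
    simp [hfix] at hσ1
  have hCS : C = f • S := eq_smul_of_mul_self_eq_smul_mul
    ((CFC.isUnit_sqrt_iff σ hσ.posSemidef.nonneg).mpr hσ.isUnit) hf (hS.trans hfix)
  have hCC : C * C = (f * f) • σ := by rw [hCS, smul_mul_smul, hS]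
  rw [hCC, trace_smul, hσ1, smul_eq_mul, mul_one, smul_smul, inv_mul_cancel₀ (mul_ne_zero hf hf),
    one_smul]

/-- A positive definite fixed point commuting with all states of the ensemble equals the
Commuting estimator C²/Tr(C²) with C = Σᵢ pᵢ ρᵢ^{1/2}. -/
theorem fixed_point_commuting_is_commuting_estimator
    (ρ : Fin n → Matrix (Fin d) (Fin d) ℂ) (p : Fin n → ℝ)
    (σ : Matrix (Fin d) (Fin d) ℂ)
    (hρ : ∀ i, (ρ i).PosDef ∧ (ρ i).trace = 1) (hp : IsProbVec p) (hpos : ∀ i, 0 < p i)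
    (hσ : σ.PosDef) (hσ1 : σ.trace = 1)
    (hfix : σ = ((∑ i, p i * fid (ρ i) σ : ℝ) : ℂ)⁻¹ •
      ∑ i, (p i : ℂ) • psqrt (psqrt σ * ρ i * psqrt σ))
    (hcomm : ∀ i, Commute (ρ i) σ) :
    let C : Matrix (Fin d) (Fin d) ℂ := ∑ i, (p i : ℂ) • psqrt (ρ i)
    σ = ((C * C).trace)⁻¹ • (C * C) :=
  fixed_point_commuting_is_commuting_estimator_general ρ p σ hρ hσ hσ1 hfix hcomm
end
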